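/- Let X be a connected graph on which a group G acts with finitely many orbits of edges and finite edge stabilizers, and suppose X is hyperbolic and fine. Fix representatives v₁,…,vₖ of the vertex orbits. Then G is hyperbolic relative to the collection of infinite stabilizers among G_{v₁},…,G_{vₖ}. -/

import Mathlib

open Filter

universe u

/-- A graph is fine if for each edge `{a, b}` and each `n`, only finitely many
circuits (embedded cycles) of length at most `n` contain that edge. -/
def Fine {V : Type*} (G : SimpleGraph V) : Prop :=
  ∀ ⦃a b : V⦄, G.Adj a b → ∀ n : ℕ,
    {w : G.Walk a a | w.IsCycle ∧ w.length ≤ n ∧ s(a, b) ∈ w.edges}.Finite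

/-- The Gromov product in a graph, with respect to the path metric. -/
noncomputable def gpd {V : Type*} (X : SimpleGraph V) (p a b : V) : ℝ :=
  ((X.dist p a : ℝ) + (X.dist p b : ℝ) - (X.dist a b : ℝ)) / 2

/-- A graph is δ-hyperbolic (four-point inequality for its path metric). -/
def GraphHyp {V : Type*} (X : SimpleGraph V) (δ : ℝ) : Prop :=
  ∀ p a b c : V, min (gpd X p a b) (gpd X p b c) - δ ≤ gpd X p a c

/-- The conjugate of a subgroup. -/
def conjSub {Γ : Type*} [Group Γ] (g : Γ) (H : Subgroup Γ) : Subgroup Γ :=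
  Subgroup.map (MulAut.conj g).toMonoidHom H

/-- Bowditch's definition of relative hyperbolicity: `Γ` is hyperbolic relative
to the finite collection `H` if it acts on a connected, fine, hyperbolic graph
with finite edge stabilizers, finitely many orbits of edges, and vertex
stabilizers of infinite-valence vertices exactly the conjugates of the `H i`. -/
def RelativelyHyperbolic (Γ : Type*) [Group Γ] {ι : Type*} [Finite ι]
    (H : ι → Subgroup Γ) : Prop :=
  ∃ (V : Type u) (X : SimpleGraph V) (_ : MulAction Γ V),
    (∀ (g : Γ) (a b : V), X.Adj a b → X.Adj (g • a) (g • b)) ∧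
    X.Connected ∧ Fine X ∧ (∃ δ : ℝ, GraphHyp X δ) ∧
    (∀ a b : V, X.Adj a b → {g : Γ | g • a = a ∧ g • b = b}.Finite) ∧
    (∃ E₀ : Finset (V × V), ∀ a b : V, X.Adj a b →
      ∃ g : Γ, ∃ p ∈ E₀, g • p.1 = a ∧ g • p.2 = b) ∧
    (∀ v : V, (X.neighborSet v).Infinite →
      ∃ (i : ι) (g : Γ), MulAction.stabilizer Γ v = conjSub g (H i)) ∧
    (∀ i : ι, ∃ v : V, (X.neighborSet v).Infinite ∧
      MulAction.stabilizer Γ v = H i)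

/-!
With finitely many orbits of edges and finite edge stabilizers, a vertex `w` with a neighbour `b`
has infinite valence exactly when `Γ_w` is infinite. Indeed the link of `w` is covered by the
finitely many sets `{g • b' | g • a' = w}`, `(a', b')` running over edge representatives, each the
image of a coset of `Γ_w`; and `Γ_w` is covered by the sets `{g | g • (w, b) = (w, c)}`, `c` in
the link, each a coset of the stabilizer of the edge `(w, b)`. So when `X` has an edge it is itself
the required graph, the stabilizers of infinite-valence vertices being the conjugates of the
infinite `Γ_{v_i}`. When `X` is a single vertex every `Γ_{v_i}` is all of `Γ`, and the cone over
`Γ` (a star, hence fine and of diameter two) does the job instead.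
-/

open MulAction SimpleGraph

section GroupAction

variable {Γ : Type*} [Group Γ]

theorem Subgroup.infinite_top_iff : Infinite (⊤ : Subgroup Γ) ↔ Infinite Γ :=
  Subgroup.topEquiv.toEquiv.infinite_iff

variable {V : Type*} [MulAction Γ V]

theorem finite_setOf_smul_eq {a : V} (ha : {g : Γ | g • a = a}.Finite) (b : V) :
    {g : Γ | g • a = b}.Finite := by
  rcases em (∃ g₀ : Γ, g₀ • a = b) with ⟨g₀, hg₀⟩ | hb
  · refine (ha.image (g₀ * ·)).subset fun g hg => ⟨g₀⁻¹ * g, ?_, mul_inv_cancel_left g₀ g⟩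
    rw [Set.mem_ofPred_eq, mul_smul, hg, ← hg₀, inv_smul_smul]
  · exact Set.finite_empty.subset fun g hg => hb ⟨g, hg⟩

variable {X : SimpleGraph V}

theorem finite_neighborSet_of_finite_stabilizer {E₀ : Finset (V × V)}
    (hE₀ : ∀ a b : V, X.Adj a b → ∃ g : Γ, ∃ p ∈ E₀, g • p.1 = a ∧ g • p.2 = b) {w : V}
    (hw : (stabilizer Γ w : Set Γ).Finite) : (X.neighborSet w).Finite := by
  refine (E₀.finite_toSet.biUnion fun p _ =>
    ((finite_setOf_smul_eq hw p.1).image fun g => g⁻¹ • p.2)).subset fun b hb => ?_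
  obtain ⟨g, p, hp, rfl, rfl⟩ := hE₀ _ _ hb
  exact Set.mem_biUnion hp ⟨g⁻¹, inv_smul_smul g p.1, by simp⟩

theorem finite_stabilizer_of_finite_neighborSet
    (hact : ∀ (g : Γ) (a b : V), X.Adj a b → X.Adj (g • a) (g • b))
    {w b : V} (hb : X.Adj w b) (hedge : {g : Γ | g • w = w ∧ g • b = b}.Finite)
    (hw : (X.neighborSet w).Finite) : (stabilizer Γ w : Set Γ).Finite := by
  have hpair : {g : Γ | g • (w, b) = (w, b)}.Finite := by simpa [Prod.ext_iff] using hedge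
  refine (hw.biUnion fun c _ => finite_setOf_smul_eq hpair (w, c)).subset fun g hg => ?_
  have hgw : g • w = w := hg
  refine Set.mem_biUnion (x := g • b) ?_ (Prod.ext hgw rfl)
  simpa [hgw] using hact g w b hb

theorem infinite_neighborSet_iff_infinite_stabilizer
    (hact : ∀ (g : Γ) (a b : V), X.Adj a b → X.Adj (g • a) (g • b))
    (hedge : ∀ a b : V, X.Adj a b → {g : Γ | g • a = a ∧ g • b = b}.Finite)
    {E₀ : Finset (V × V)}
    (hE₀ : ∀ a b : V, X.Adj a b → ∃ g : Γ, ∃ p ∈ E₀, g • p.1 = a ∧ g • p.2 = b)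
    {w b : V} (hb : X.Adj w b) :
    (X.neighborSet w).Infinite ↔ Infinite (stabilizer Γ w) := by
  rw [← SetLike.coe_sort_coe, Set.infinite_coe_iff]
  exact ⟨mt (finite_neighborSet_of_finite_stabilizer hE₀),
    mt (finite_stabilizer_of_finite_neighborSet hact hb (hedge w b hb))⟩

theorem starGraph_adj_smul {r : V} (hr : ∀ g : Γ, g • r = r) (g : Γ) {a b : V}
    (hab : (starGraph r).Adj a b) : (starGraph r).Adj (g • a) (g • b) := by
  have hfix (x : V) : g • x = r ↔ x = r := (MulAction.injective g).eq_iff' (hr g)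
  rw [starGraph_adj] at hab ⊢
  rwa [hfix, hfix, (MulAction.injective g).ne_iff]

end GroupAction

section Graph

variable {V : Type*} {X : SimpleGraph V}

theorem SimpleGraph.IsAcyclic.fine (h : X.IsAcyclic) : Fine X :=
  fun _ _ _ _ => Set.finite_empty.subset fun c hc => h c hc.1

theorem SimpleGraph.IsUniversal.dist_le_two {r : V} (h : X.IsUniversal r) (a b : V) :
    X.dist a b ≤ 2 := by
  have hr (x : V) : X.dist r x ≤ 1 := by
    rcases eq_or_ne r x with rfl | hx
    · simp
    · exact (dist_eq_one_iff_adj.2 (h hx)).le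
  calc X.dist a b ≤ X.dist a r + X.dist r b := (Connected.of_isUniversal h).dist_triangle
    _ ≤ 1 + 1 := add_le_add (dist_comm (G := X) ▸ hr a) (hr b)

theorem graphHyp_of_dist_le {D : ℕ} (h : ∀ a b : V, X.dist a b ≤ D) :
    GraphHyp X (3 * D / 2) := by
  intro p a b c
  have hD (x y : V) : (X.dist x y : ℝ) ≤ D := by exact_mod_cast h x y
  have hmin := min_le_left (gpd X p a b) (gpd X p b c)
  unfold gpd at *
  linarith [hD p a, hD p b, hD a c, (X.dist a b).cast_nonneg (α := ℝ),
    (X.dist p a).cast_nonneg (α := ℝ), (X.dist p c).cast_nonneg (α := ℝ)]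

end Graph

theorem relativelyHyperbolic_of_infinite_stabilizers {Γ : Type*} [Group Γ] {ι : Type*}
    [Finite ι] (H : ι → Subgroup Γ) {V : Type u} [Nontrivial V] [MulAction Γ V]
    (X : SimpleGraph V) (hact : ∀ (g : Γ) (a b : V), X.Adj a b → X.Adj (g • a) (g • b))
    (hconn : X.Connected) (hfine : Fine X) {δ : ℝ} (hhyp : GraphHyp X δ)
    (hedge : ∀ a b : V, X.Adj a b → {g : Γ | g • a = a ∧ g • b = b}.Finite)
    (heorb : ∃ E₀ : Finset (V × V), ∀ a b : V, X.Adj a b →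
      ∃ g : Γ, ∃ p ∈ E₀, g • p.1 = a ∧ g • p.2 = b)
    (hconj : ∀ w : V, Infinite (stabilizer Γ w) →
      ∃ (i : ι) (g : Γ), stabilizer Γ w = conjSub g (H i))
    (hreal : ∀ i : ι, ∃ w : V, Infinite (stabilizer Γ w) ∧ stabilizer Γ w = H i) :
    RelativelyHyperbolic.{u} Γ H := by
  obtain ⟨E₀, hE₀⟩ := heorb
  have hval (w : V) : (X.neighborSet w).Infinite ↔ Infinite (stabilizer Γ w) :=
    have ⟨_, hb⟩ := hconn.preconnected.exists_adj_of_nontrivial w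
    infinite_neighborSet_iff_infinite_stabilizer hact hedge hE₀ hb
  refine ⟨V, X, inferInstance, hact, hconn, hfine, ⟨δ, hhyp⟩, hedge, ⟨E₀, hE₀⟩,
    fun w hw => hconj w ((hval w).1 hw), fun i => ?_⟩
  obtain ⟨w, hw, hwi⟩ := hreal i
  exact ⟨w, (hval w).2 hw, hwi⟩

section Cone

universe v

variable {Γ : Type v}

/-- The cone over `Γ`: apex `⟨none⟩`, one leaf `⟨some x⟩` for each `x : Γ`. The `ULift` puts it
in the universe of the graphs that `RelativelyHyperbolic.{u}` quantifies over. -/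
abbrev coneGraph (Γ : Type v) : SimpleGraph (ULift.{u} (Option Γ)) :=
  starGraph ⟨none⟩

theorem exists_of_coneGraph_adj {a b : ULift.{u} (Option Γ)} (hab : (coneGraph Γ).Adj a b) :
    ∃ x : Γ, (a = ⟨none⟩ ∧ b = ⟨some x⟩) ∨ (a = ⟨some x⟩ ∧ b = ⟨none⟩) := by
  obtain ⟨⟨_ | x⟩⟩ := a <;> obtain ⟨⟨_ | y⟩⟩ := b <;> simp_all

variable [Group Γ]

@[simp]
theorem ULift.smul_up_some (g x : Γ) : g • ULift.up.{u} (some x) = ULift.up (some (g * x)) :=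
  rfl

theorem stabilizer_up_none : stabilizer Γ (ULift.up.{u} (none : Option Γ)) = ⊤ :=
  eq_top_iff.2 fun _ _ => rfl

theorem stabilizer_up_some (x : Γ) : stabilizer Γ (ULift.up.{u} (some x)) = ⊥ := by
  ext g
  simp

theorem eq_up_none_of_infinite_stabilizer {w : ULift.{u} (Option Γ)}
    (hw : Infinite (stabilizer Γ w)) : w = ⟨none⟩ := by
  obtain ⟨_ | x⟩ := w
  · rfl
  · rw [stabilizer_up_some] at hw
    exact absurd hw (not_infinite_iff_finite.2 inferInstance)

theorem finite_edgeStabilizer_coneGraph {a b : ULift.{u} (Option Γ)}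
    (hab : (coneGraph Γ).Adj a b) : {g : Γ | g • a = a ∧ g • b = b}.Finite := by
  obtain ⟨x, ⟨rfl, rfl⟩ | ⟨rfl, rfl⟩⟩ := exists_of_coneGraph_adj hab
  · exact (Set.finite_singleton 1).subset fun g hg => by simpa using hg.2
  · exact (Set.finite_singleton 1).subset fun g hg => by simpa using hg.1

theorem finite_edgeOrbits_coneGraph : ∃ E₀ : Finset (ULift.{u} (Option Γ) × ULift (Option Γ)),
    ∀ a b, (coneGraph Γ).Adj a b → ∃ g : Γ, ∃ p ∈ E₀, g • p.1 = a ∧ g • p.2 = b := by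
  classical
  refine ⟨{(⟨none⟩, ⟨some 1⟩), (⟨some 1⟩, ⟨none⟩)}, fun a b hab => ?_⟩
  obtain ⟨x, ⟨rfl, rfl⟩ | ⟨rfl, rfl⟩⟩ := exists_of_coneGraph_adj hab
  · exact ⟨x, (⟨none⟩, ⟨some 1⟩), by simp, rfl, by simp⟩
  · exact ⟨x, (⟨some 1⟩, ⟨none⟩), by simp, by simp, rfl⟩

theorem relativelyHyperbolic_of_forall_eq_top {ι : Type*} [Finite ι] (H : ι → Subgroup Γ)
    (hH : ∀ i, H i = ⊤) (hι : Nonempty ι ↔ Infinite Γ) :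
    RelativelyHyperbolic.{max v u} Γ H := by
  refine relativelyHyperbolic_of_infinite_stabilizers H (coneGraph Γ)
    (fun g _ _ => starGraph_adj_smul (fun _ => rfl) g) (connected_starGraph _)
    (isAcyclic_starGraph _).fine (graphHyp_of_dist_le isUniversal_starGraph_self.dist_le_two)
    (fun _ _ => finite_edgeStabilizer_coneGraph) finite_edgeOrbits_coneGraph
    (fun w hw => ?_) fun i => ⟨⟨none⟩, ?_, by rw [stabilizer_up_none, hH]⟩
  · obtain rfl := eq_up_none_of_infinite_stabilizer hw
    rw [stabilizer_up_none, Subgroup.infinite_top_iff] at hw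
    obtain ⟨i⟩ := hι.2 hw
    exact ⟨i, 1, by simpa [conjSub, hH] using stabilizer_up_none⟩
  · rw [stabilizer_up_none, Subgroup.infinite_top_iff]
    exact hι.1 ⟨i⟩

end Cone

/-- a group acting on a connected, fine, hyperbolic graph with
finitely many orbits of edges and finite edge stabilizers is hyperbolic
relative to the infinite stabilizers of orbit representatives of vertices. -/
theorem relatively_hyperbolic_of_action_on_fine_graph {Γ : Type} [Group Γ]
    {V : Type u} (X : SimpleGraph V) [MulAction Γ V]
    (hact : ∀ (g : Γ) (a b : V), X.Adj a b → X.Adj (g • a) (g • b))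
    (hconn : X.Connected) (hfine : Fine X) (δ : ℝ) (hhyp : GraphHyp X δ)
    (hedge : ∀ a b : V, X.Adj a b → {g : Γ | g • a = a ∧ g • b = b}.Finite)
    (heorb : ∃ E₀ : Finset (V × V), ∀ a b : V, X.Adj a b →
      ∃ g : Γ, ∃ p ∈ E₀, g • p.1 = a ∧ g • p.2 = b)
    (k : ℕ) (v : Fin k → V)
    (hrep : ∀ w : V, ∃ (i : Fin k) (g : Γ), g • v i = w) :
    RelativelyHyperbolic.{u} Γ
      (fun i : {i : Fin k // Infinite (MulAction.stabilizer Γ (v i))} =>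
        MulAction.stabilizer Γ (v i.1)) := by
  rcases subsingleton_or_nontrivial V with _ | _
  · have htop (i : Fin k) : stabilizer Γ (v i) = ⊤ :=
      eq_top_iff.2 fun _ _ => Subsingleton.elim _ _
    refine relativelyHyperbolic_of_forall_eq_top _ (fun i => htop i.1)
      ⟨fun ⟨i⟩ => ?_, fun hΓ => ?_⟩
    · simpa only [htop, Subgroup.infinite_top_iff] using i.2
    · obtain ⟨i, -⟩ := hrep hconn.nonempty.some
      exact ⟨⟨i, by rwa [htop, Subgroup.infinite_top_iff]⟩⟩
  · refine relativelyHyperbolic_of_infinite_stabilizers _ X hact hconn hfine hhyp hedge heorb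
      (fun w hw => ?_) fun i => ⟨v i, i.2, rfl⟩
    obtain ⟨i, g, rfl⟩ := hrep w
    exact ⟨⟨i, (stabilizerEquivStabilizer rfl).toEquiv.infinite_iff.2 hw⟩, g,
      stabilizer_smul_eq_stabilizer_map_conj g (v i)⟩
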